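/- arXiv:2106.07000 — 2 statements merged into one kernel-verified Lean document; each statement's English description precedes it below -/
import Mathlib

section
/- Let X₁, …, X_N be i.i.d. points with common 3D-distance density f_W on [h_u, w_p], let each independently be LOS with probability κ_l(w) (given distance w) and NLOS otherwise, and let the nearest BS distance R_g be independent with P(R_g > r) = exp(−πλ_g r²). Then the probability that the UE associates with a LOS UAV, i.e. that some point is LOS at distance r while every other point is either LOS at distance > r or NLOS at distance > E(r), and R_g > E_u(r), equals N·∫_{h_u}^{w_p} f_W(r)·κ_l(r)·exp(−πλ_g E_u(r)²)·(∫_r^{w_p} f_W(w)κ_l(w)dw + ∫_{E(r)}^{w_p} f_W(w)(1−κ_l(w))dw)^{N−1} dr. -/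
open MeasureTheory ProbabilityTheory Real

/-- LOS-UAV association probability, Lemma 1:
`N` i.i.d. UAVs with 3D-distance density `f_W` supported on `[h_u, w_p]`, each
independently LOS with conditional probability `κ_l(w)` given distance `w`; the
nearest-BS distance `R_g` is independent with `P(R_g > r) = exp(−πλ_g r²)`.
The UE associates with a LOS UAV (some UAV `i` is LOS, every other UAV is either LOS
farther than `W_i` or NLOS farther than `E(W_i)`, and `R_g > E_u(W_i)`) with
probability
`N ∫_{h_u}^{w_p} f_W(r) κ_l(r) e^{−πλ_g E_u(r)²}
   (∫_r^{w_p} f_W κ_l + ∫_{E(r)}^{w_p} f_W (1−κ_l))^{N−1} dr`. -/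
theorem los_uav_association_probability
    {α : Type*} [MeasurableSpace α] (μ : Measure α) [IsProbabilityMeasure μ]
    (N : ℕ) (hN : 0 < N) (hu wp lamg : ℝ) (hhu : 0 < hu) (hwp : hu < wp)
    (hlamg : 0 < lamg)
    (fW : ℝ → ℝ) (hfWmeas : Measurable fW) (hfWnonneg : ∀ w, 0 ≤ fW w)
    (hfWsupp : ∀ w, w < hu ∨ wp < w → fW w = 0)
    (hfWint : ∫ w, fW w = 1)
    (κ : ℝ → ℝ) (hκmeas : Measurable κ) (hκ0 : ∀ w, 0 ≤ κ w) (hκ1 : ∀ w, κ w ≤ 1)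
    (E Eu : ℝ → ℝ) (hEmeas : Measurable E) (hEumeas : Measurable Eu)
    (hEunonneg : ∀ r, 0 ≤ Eu r)
    (W : Fin N → α → ℝ) (L : Fin N → α → Bool)
    (hWLmeas : ∀ i, Measurable (fun ω => (W i ω, L i ω)))
    -- joint law of (distance, LOS mark) of each UAV:
    (hlaw : ∀ i, ∀ s : Set ℝ, MeasurableSet s →
      μ {ω | W i ω ∈ s ∧ L i ω = true} = ENNReal.ofReal (∫ w in s, fW w * κ w)
      ∧ μ {ω | W i ω ∈ s ∧ L i ω = false}
          = ENNReal.ofReal (∫ w in s, fW w * (1 - κ w)))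
    -- independence across UAVs and of the nearest-BS distance:
    (hiid : iIndepFun (fun i ω => (W i ω, L i ω)) μ)
    (R : α → ℝ) (hRmeas : Measurable R)
    (hRindep : IndepFun R (fun ω => fun i => (W i ω, L i ω)) μ)
    (hvoid : ∀ r : ℝ, 0 ≤ r →
      μ {ω | R ω > r} = ENNReal.ofReal (Real.exp (-(π * lamg * r ^ 2)))) :
    μ {ω | ∃ i, L i ω = true
        ∧ (∀ j, j ≠ i →
            ((L j ω = true ∧ W j ω > W i ω)
              ∨ (L j ω = false ∧ W j ω > E (W i ω))))
        ∧ R ω > Eu (W i ω)}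
      = ENNReal.ofReal ((N : ℝ) *
          ∫ r in Set.Icc hu wp,
            fW r * κ r * Real.exp (-(π * lamg * (Eu r) ^ 2))
              * ((∫ w in Set.Icc r wp, fW w * κ w)
                  + ∫ w in Set.Icc (E r) wp, fW w * (1 - κ w)) ^ (N - 1)) := by
  classical
  obtain ⟨n, rfl⟩ : ∃ n, N = n + 1 := ⟨N - 1, (Nat.succ_pred_eq_of_pos hN).symm⟩
  simp only [Nat.add_sub_cancel]
  -- basic integrability facts
  have hfWInt : Integrable fW := by
    by_contra h
    rw [integral_undef h] at hfWint
    exact one_ne_zero hfWint.symm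
  have hIntg : ∀ g : ℝ → ℝ, Measurable g → (∀ w, 0 ≤ g w) → (∀ w, g w ≤ 1) →
      Integrable (fun w => fW w * g w) := by
    intro g hg h0 h1
    refine hfWInt.mono ((hfWmeas.mul hg).aestronglyMeasurable) (ae_of_all _ fun w => ?_)
    rw [Real.norm_of_nonneg (mul_nonneg (hfWnonneg w) (h0 w)),
      Real.norm_of_nonneg (hfWnonneg w)]
    calc fW w * g w ≤ fW w * 1 := mul_le_mul_of_nonneg_left (h1 w) (hfWnonneg w)
    _ = fW w := mul_one _
  have h1κ0 : ∀ w, (0:ℝ) ≤ 1 - κ w := fun w => sub_nonneg.mpr (hκ1 w)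
  have h1κ1 : ∀ w, 1 - κ w ≤ 1 := fun w => by linarith [hκ0 w]
  have hIntκ : Integrable (fun w => fW w * κ w) := hIntg κ hκmeas hκ0 hκ1
  have hIntκ' : Integrable (fun w => fW w * (1 - κ w)) :=
    hIntg _ (measurable_const.sub hκmeas) h1κ0 h1κ1
  have hκnn : ∀ w, 0 ≤ fW w * κ w := fun w => mul_nonneg (hfWnonneg w) (hκ0 w)
  have hκ'nn : ∀ w, 0 ≤ fW w * (1 - κ w) := fun w => mul_nonneg (hfWnonneg w) (h1κ0 w)
  -- integrals over `Ioi` coincide with integrals over `Icc · wp`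
  have hIoiIcc : ∀ f : ℝ → ℝ, Integrable f → (∀ w, wp < w → f w = 0) →
      ∀ a : ℝ, ∫ w in Set.Ioi a, f w = ∫ w in Set.Icc a wp, f w := by
    intro f hf hsupp a
    by_cases ha : a ≤ wp
    · have hzero : ∫ w in Set.Ioi wp, f w = 0 := by
        rw [setIntegral_congr_fun (g := fun _ => (0:ℝ)) measurableSet_Ioi
          (fun x hx => hsupp x hx)]
        simp
      have hdisj : Disjoint (Set.Ioc a wp) (Set.Ioi wp) := by
        rw [Set.disjoint_left]
        rintro x ⟨_, h1⟩ h2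
        exact absurd h1 (not_le.mpr h2)
      rw [show Set.Ioi a = Set.Ioc a wp ∪ Set.Ioi wp from (Set.Ioc_union_Ioi_eq_Ioi ha).symm,
        setIntegral_union hdisj measurableSet_Ioi hf.integrableOn hf.integrableOn,
        hzero, add_zero, ← MeasureTheory.integral_Icc_eq_integral_Ioc]
    · push_neg at ha
      have h1 : ∫ w in Set.Ioi a, f w = 0 := by
        rw [setIntegral_congr_fun (g := fun _ => (0:ℝ)) measurableSet_Ioi
          (fun x hx => hsupp x (lt_trans ha hx))]
        simp
      rw [h1, Set.Icc_eq_empty (not_le.mpr ha)]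
      simp
  have hsupκ : ∀ w, wp < w → fW w * κ w = 0 := fun w h => by
    rw [hfWsupp w (Or.inr h), zero_mul]
  have hsupκ' : ∀ w, wp < w → fW w * (1 - κ w) = 0 := fun w h => by
    rw [hfWsupp w (Or.inr h), zero_mul]
  -- monotonicity gives measurability of the tail integrals
  have hAnti : ∀ f : ℝ → ℝ, Integrable f → (∀ w, 0 ≤ f w) →
      Antitone (fun a => ∫ w in Set.Ioi a, f w) := by
    intro f hf h0 a b hab
    exact setIntegral_mono_set hf.integrableOn (ae_of_all _ h0)
      (HasSubset.Subset.eventuallyLE (Set.Ioi_subset_Ioi hab))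
  set Fn : ℝ → ℝ := fun r =>
    (∫ w in Set.Ioi r, fW w * κ w) + ∫ w in Set.Ioi (E r), fW w * (1 - κ w) with hFn_def
  have hFnIcc : ∀ r : ℝ, Fn r =
      (∫ w in Set.Icc r wp, fW w * κ w) + ∫ w in Set.Icc (E r) wp, fW w * (1 - κ w) := by
    intro r
    simp only [hFn_def]
    rw [hIoiIcc _ hIntκ hsupκ r, hIoiIcc _ hIntκ' hsupκ' (E r)]
  have hFnmeas : Measurable Fn := by
    rw [hFn_def]
    exact ((hAnti _ hIntκ hκnn).measurable).add
      (((hAnti _ hIntκ' hκ'nn).measurable).comp hEmeas)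
  have hFnnn : ∀ r, 0 ≤ Fn r := by
    intro r
    rw [hFn_def]
    exact add_nonneg (setIntegral_nonneg measurableSet_Ioi fun w _ => hκnn w)
      (setIntegral_nonneg measurableSet_Ioi fun w _ => hκ'nn w)
  have hFnle1 : ∀ r, Fn r ≤ 1 := by
    intro r
    have h1 : ∫ w in Set.Ioi r, fW w * κ w ≤ ∫ w, fW w * κ w :=
      setIntegral_le_integral hIntκ (ae_of_all _ hκnn)
    have h2 : ∫ w in Set.Ioi (E r), fW w * (1 - κ w) ≤ ∫ w, fW w * (1 - κ w) :=
      setIntegral_le_integral hIntκ' (ae_of_all _ hκ'nn)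
    have h3 : (∫ w, fW w * κ w) + (∫ w, fW w * (1 - κ w)) = 1 := by
      rw [← integral_add hIntκ hIntκ']
      have : (fun w => fW w * κ w + fW w * (1 - κ w)) = fW := by
        funext w; ring
      rw [this, hfWint]
    rw [hFn_def]
    dsimp only
    linarith
  -- the common distribution of the (distance, LOS) pairs
  have hwd : ∀ g : ℝ → ℝ, Integrable g → (∀ w, 0 ≤ g w) → ∀ s : Set ℝ, MeasurableSet s →
      (volume.withDensity fun w => ENNReal.ofReal (g w)) s
        = ENNReal.ofReal (∫ w in s, g w) := by
    intro g hg h0 s hs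
    rw [withDensity_apply _ hs]
    exact (ofReal_integral_eq_lintegral_ofReal hg.integrableOn (ae_of_all _ h0)).symm
  set m : Measure (ℝ × Bool) :=
    (volume.withDensity fun w => ENNReal.ofReal (fW w * κ w)).map (fun w => (w, true))
      + (volume.withDensity fun w => ENNReal.ofReal (fW w * (1 - κ w))).map
          (fun w => (w, false)) with hm_def
  have hmX : ∀ i, μ.map (fun ω => (W i ω, L i ω)) = m := by
    intro i
    ext A hA
    have hAt : MeasurableSet ((fun w : ℝ => (w, true)) ⁻¹' A) :=
      hA.preimage measurable_prodMk_right
    have hAf : MeasurableSet ((fun w : ℝ => (w, false)) ⁻¹' A) :=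
      hA.preimage measurable_prodMk_right
    rw [Measure.map_apply (hWLmeas i) hA]
    have hsplit : (fun ω => (W i ω, L i ω)) ⁻¹' A
        = {ω | W i ω ∈ (fun w : ℝ => (w, true)) ⁻¹' A ∧ L i ω = true}
          ∪ {ω | W i ω ∈ (fun w : ℝ => (w, false)) ⁻¹' A ∧ L i ω = false} := by
      ext ω
      cases h : L i ω <;> simp [Set.mem_preimage, h]
    have hdisj : Disjoint {ω | W i ω ∈ ((fun w : ℝ => (w, true)) ⁻¹' A) ∧ L i ω = true}
        {ω | W i ω ∈ ((fun w : ℝ => (w, false)) ⁻¹' A) ∧ L i ω = false} := by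
      rw [Set.disjoint_left]
      rintro ω ⟨-, h1⟩ ⟨-, h2⟩
      rw [h1] at h2
      exact Bool.noConfusion h2
    have hmeas2 : MeasurableSet {ω | W i ω ∈ ((fun w : ℝ => (w, false)) ⁻¹' A)
        ∧ L i ω = false} := by
      have : {ω | W i ω ∈ ((fun w : ℝ => (w, false)) ⁻¹' A) ∧ L i ω = false}
          = (fun ω => (W i ω, L i ω)) ⁻¹'
              (((fun w : ℝ => (w, false)) ⁻¹' A) ×ˢ ({false} : Set Bool)) := rfl
      rw [this]
      exact (hWLmeas i) (hAf.prod (measurableSet_singleton _))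
    rw [hsplit, measure_union hdisj hmeas2, (hlaw i _ hAt).1, (hlaw i _ hAf).2,
      hm_def, Measure.add_apply, Measure.map_apply measurable_prodMk_right hA,
      Measure.map_apply measurable_prodMk_right hA,
      hwd _ hIntκ hκnn _ hAt, hwd _ hIntκ' hκ'nn _ hAf]
  haveI hmprob : IsProbabilityMeasure m := by
    constructor
    rw [← hmX ⟨0, Nat.succ_pos n⟩,
      Measure.map_apply (hWLmeas _) MeasurableSet.univ, Set.preimage_univ, measure_univ]
  haveI hRprob : IsProbabilityMeasure (μ.map R) :=
    Measure.isProbabilityMeasure_map hRmeas.aemeasurable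
  -- law of the whole vector of pairs
  have hYmeas : Measurable (fun ω => fun i => (W i ω, L i ω)) :=
    measurable_pi_iff.mpr hWLmeas
  have hYlaw : μ.map (fun ω => fun i => (W i ω, L i ω))
      = Measure.pi (fun _ : Fin (n+1) => m) := by
    refine (Measure.pi_eq fun s hs => ?_).symm
    rw [Measure.map_apply hYmeas (MeasurableSet.univ_pi hs)]
    have hpre : (fun ω => fun i => (W i ω, L i ω)) ⁻¹' Set.pi Set.univ s
        = ⋂ i, (fun ω => (W i ω, L i ω)) ⁻¹' s i := by
      ext ω; simp [Set.mem_pi]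
    rw [hpre, hiid.meas_iInter fun i => ⟨s i, hs i, rfl⟩]
    exact Finset.prod_congr rfl fun i _ => by
      rw [← hmX i, Measure.map_apply (hWLmeas i) (hs i)]
  have hZmeas : Measurable (fun ω => (fun i => (W i ω, L i ω), R ω)) :=
    hYmeas.prodMk hRmeas
  have hZlaw : μ.map (fun ω => (fun i => (W i ω, L i ω), R ω))
      = (Measure.pi fun _ : Fin (n+1) => m).prod (μ.map R) := by
    rw [← hYlaw]
    exact (indepFun_iff_map_prod_eq_prod_map_map hYmeas.aemeasurable
      hRmeas.aemeasurable).mp hRindep.symm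
  have hρIoi : ∀ r : ℝ, 0 ≤ r →
      μ.map R (Set.Ioi r) = ENNReal.ofReal (Real.exp (-(π * lamg * r ^ 2))) := by
    intro r hr
    rw [Measure.map_apply hRmeas measurableSet_Ioi]
    exact hvoid r hr
  -- key sets
  set D : Set (ℝ × (ℝ × Bool)) :=
    {q | (q.2.2 = true ∧ q.1 < q.2.1) ∨ (q.2.2 = false ∧ E q.1 < q.2.1)} with hD_def
  have hDmeas : MeasurableSet D := by
    rw [hD_def]
    have h1 : {q : ℝ × (ℝ × Bool) | (q.2.2 = true ∧ q.1 < q.2.1)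
        ∨ (q.2.2 = false ∧ E q.1 < q.2.1)}
        = ((fun q : ℝ × (ℝ × Bool) => q.2.2) ⁻¹' {true} ∩ {q | q.1 < q.2.1})
          ∪ ((fun q : ℝ × (ℝ × Bool) => q.2.2) ⁻¹' {false} ∩ {q | E q.1 < q.2.1}) := by
      ext q
      simp [Set.mem_preimage]
    rw [h1]
    exact ((measurable_snd.snd (measurableSet_singleton true)).inter
        (measurableSet_lt measurable_fst measurable_snd.fst)).union
      ((measurable_snd.snd (measurableSet_singleton false)).inter
        (measurableSet_lt (hEmeas.comp measurable_fst) measurable_snd.fst))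
  set S : Fin (n+1) → Set ((Fin (n+1) → ℝ × Bool) × ℝ) := fun i =>
    {q | (q.1 i).2 = true ∧ (∀ j, j ≠ i → ((q.1 i).1, q.1 j) ∈ D)
      ∧ Eu (q.1 i).1 < q.2} with hS_def
  set T : Fin (n+1) → Set (Fin (n+1) → ℝ × Bool) := fun i =>
    {x | (x i).2 = true ∧ ∀ j, j ≠ i → ((x i).1, x j) ∈ D} with hT_def
  have hTmeas : ∀ i, MeasurableSet (T i) := by
    intro i
    simp only [hT_def]
    have hx1 : Measurable fun x : Fin (n+1) → ℝ × Bool => x i := measurable_pi_apply i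
    have h1 : {x : Fin (n+1) → ℝ × Bool | (x i).2 = true ∧ ∀ j, j ≠ i → ((x i).1, x j) ∈ D}
        = ((fun x : Fin (n+1) → ℝ × Bool => (x i).2) ⁻¹' {true})
          ∩ ⋂ j, {x : Fin (n+1) → ℝ × Bool | j ≠ i → ((x i).1, x j) ∈ D} := by
      ext x
      simp [Set.mem_iInter]
    rw [h1]
    refine (hx1.snd (measurableSet_singleton true)).inter (MeasurableSet.iInter fun j => ?_)
    by_cases hj : j = i
    · simp [hj]
    · have : {x : Fin (n+1) → ℝ × Bool | j ≠ i → ((x i).1, x j) ∈ D}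
          = (fun x : Fin (n+1) → ℝ × Bool => ((x i).1, x j)) ⁻¹' D := by
        ext x; simp [hj]
      rw [this]
      exact hDmeas.preimage (hx1.fst.prodMk (measurable_pi_apply j))
  have hSmeas : ∀ i, MeasurableSet (S i) := by
    intro i
    simp only [hS_def]
    have hx1 : Measurable fun q : (Fin (n+1) → ℝ × Bool) × ℝ => q.1 i :=
      (measurable_pi_apply i).comp measurable_fst
    have h1 : {q : (Fin (n+1) → ℝ × Bool) × ℝ | (q.1 i).2 = true
        ∧ (∀ j, j ≠ i → ((q.1 i).1, q.1 j) ∈ D) ∧ Eu (q.1 i).1 < q.2}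
        = ((fun q : (Fin (n+1) → ℝ × Bool) × ℝ => q.1) ⁻¹' T i)
          ∩ {q : (Fin (n+1) → ℝ × Bool) × ℝ | Eu (q.1 i).1 < q.2} := by
      ext q
      simp only [hT_def, Set.mem_inter_iff, Set.mem_preimage, Set.mem_setOf_eq]
      tauto
    rw [h1]
    exact ((hTmeas i).preimage measurable_fst).inter
      (measurableSet_lt (hEumeas.comp hx1.fst) measurable_snd)
  -- slice measure of D
  have hslice : ∀ r : ℝ, m (Prod.mk r ⁻¹' D) = ENNReal.ofReal (Fn r) := by
    intro r
    have hA : MeasurableSet (Prod.mk r ⁻¹' D) := hDmeas.preimage measurable_prodMk_left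
    have e1 : (fun w : ℝ => (w, true)) ⁻¹' (Prod.mk r ⁻¹' D) = Set.Ioi r := by
      ext w; simp [hD_def]
    have e2 : (fun w : ℝ => (w, false)) ⁻¹' (Prod.mk r ⁻¹' D) = Set.Ioi (E r) := by
      ext w; simp [hD_def]
    rw [hm_def, Measure.add_apply, Measure.map_apply measurable_prodMk_right hA,
      Measure.map_apply measurable_prodMk_right hA, e1, e2,
      hwd _ hIntκ hκnn _ measurableSet_Ioi, hwd _ hIntκ' hκ'nn _ measurableSet_Ioi,
      ← ENNReal.ofReal_add (setIntegral_nonneg measurableSet_Ioi fun w _ => hκnn w)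
        (setIntegral_nonneg measurableSet_Ioi fun w _ => hκ'nn w), hFn_def]
  -- auxiliary measurable functions
  have hexpmeas : Measurable fun r : ℝ => ENNReal.ofReal (Real.exp (-(π * lamg * r ^ 2))) :=
    ENNReal.measurable_ofReal.comp (Real.measurable_exp.comp
      (((measurable_id.pow_const 2).const_mul (π * lamg)).neg))
  set e : ℝ × Bool → ENNReal :=
    fun y => ENNReal.ofReal (Real.exp (-(π * lamg * Eu y.1 ^ 2))) with he_def
  have hemeas : Measurable e := by
    rw [he_def]
    exact hexpmeas.comp (hEumeas.comp measurable_fst)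
  have htrueMeas : MeasurableSet {y : ℝ × Bool | y.2 = true} := by
    have : {y : ℝ × Bool | y.2 = true} = (fun y : ℝ × Bool => y.2) ⁻¹' {true} := by
      ext y; simp
    rw [this]
    exact measurable_snd (measurableSet_singleton true)
  -- the value of each association event
  have hAval : ∀ i : Fin (n+1),
      μ.map (fun ω => (fun k => (W k ω, L k ω), R ω)) (S i)
        = ENNReal.ofReal (∫ r in Set.Icc hu wp,
            fW r * κ r * Real.exp (-(π * lamg * Eu r ^ 2))
              * ((∫ w in Set.Icc r wp, fW w * κ w)
                  + ∫ w in Set.Icc (E r) wp, fW w * (1 - κ w)) ^ n) := by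
    intro i
    rw [hZlaw, Measure.prod_apply (hSmeas i)]
    have h1 : ∀ x : Fin (n+1) → ℝ × Bool,
        (μ.map R) (Prod.mk x ⁻¹' S i) = (T i).indicator (fun x => e (x i)) x := by
      intro x
      by_cases hx : x ∈ T i
      · have hx' : (x i).2 = true ∧ ∀ j, j ≠ i → ((x i).1, x j) ∈ D := hx
        have hpre : Prod.mk x ⁻¹' S i = Set.Ioi (Eu ((x i).1)) := by
          ext t
          simp only [hS_def, Set.mem_preimage, Set.mem_setOf_eq, Set.mem_Ioi]
          exact ⟨fun h => h.2.2, fun h => ⟨hx'.1, hx'.2, h⟩⟩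
        rw [hpre, hρIoi _ (hEunonneg _), Set.indicator_of_mem hx, he_def]
      · have hpre : Prod.mk x ⁻¹' S i = ∅ := by
          ext t
          simp only [hS_def, Set.mem_preimage, Set.mem_setOf_eq,
            Set.mem_empty_iff_false, iff_false]
          intro h
          exact hx ⟨h.1, h.2.1⟩
        rw [hpre, Set.indicator_of_notMem hx]
        simp
    rw [lintegral_congr h1]
    have hgmeas : Measurable ((T i).indicator fun x : Fin (n+1) → ℝ × Bool => e (x i)) :=
      Measurable.indicator (hemeas.comp (measurable_pi_apply i)) (hTmeas i)
    rw [← ((measurePreserving_piFinSuccAbove (fun _ : Fin (n+1) => m) i).symm).lintegral_comp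
      hgmeas]
    have h2 : ∀ p : (ℝ × Bool) × (Fin n → ℝ × Bool),
        (T i).indicator (fun x => e (x i))
            ((MeasurableEquiv.piFinSuccAbove (fun _ : Fin (n+1) => ℝ × Bool) i).symm p)
          = ({y : ℝ × Bool | y.2 = true}.indicator e p.1)
              * ({p : (ℝ × Bool) × (Fin n → ℝ × Bool) | ∀ k, (p.1.1, p.2 k) ∈ D}.indicator
                  (fun _ => 1) p) := by
      intro p
      obtain ⟨y, z⟩ := p
      have hsymm : (MeasurableEquiv.piFinSuccAbove (fun _ : Fin (n+1) => ℝ × Bool) i).symm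
          (y, z) = Fin.insertNth i y z := rfl
      rw [hsymm]
      by_cases hy : y.2 = true
      · by_cases hz : ∀ k : Fin n, (y.1, z k) ∈ D
        · have hmem : Fin.insertNth i y z ∈ T i := by
            rw [hT_def]
            refine ⟨by rw [Fin.insertNth_apply_same]; exact hy, fun j hj => ?_⟩
            obtain ⟨k, rfl⟩ := Fin.exists_succAbove_eq hj
            rw [Fin.insertNth_apply_same, Fin.insertNth_apply_succAbove]
            exact hz k
          rw [Set.indicator_of_mem hmem, Set.indicator_of_mem (hy : y ∈ _),
            Set.indicator_of_mem (hz : (y, z) ∈ _), Fin.insertNth_apply_same, mul_one]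
        · have hmem : Fin.insertNth i y z ∉ T i := by
            rw [hT_def]
            rintro ⟨-, hall⟩
            refine hz fun k => ?_
            have := hall (i.succAbove k) (Fin.succAbove_ne i k)
            rwa [Fin.insertNth_apply_same, Fin.insertNth_apply_succAbove] at this
          rw [Set.indicator_of_notMem hmem, Set.indicator_of_notMem
            (hz : ¬ (y, z) ∈ _), mul_zero]
      · have hmem : Fin.insertNth i y z ∉ T i := by
          rw [hT_def]
          rintro ⟨hh, -⟩
          rw [Fin.insertNth_apply_same] at hh
          exact hy hh
        rw [Set.indicator_of_notMem hmem, Set.indicator_of_notMem (hy : ¬ y ∈ _), zero_mul]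
    rw [lintegral_congr h2]
    have hUmeas : MeasurableSet
        {p : (ℝ × Bool) × (Fin n → ℝ × Bool) | ∀ k, (p.1.1, p.2 k) ∈ D} := by
      have : {p : (ℝ × Bool) × (Fin n → ℝ × Bool) | ∀ k, (p.1.1, p.2 k) ∈ D}
          = ⋂ k, (fun p : (ℝ × Bool) × (Fin n → ℝ × Bool) => (p.1.1, p.2 k)) ⁻¹' D := by
        ext p; simp
      rw [this]
      exact MeasurableSet.iInter fun k =>
        hDmeas.preimage (measurable_fst.fst.prodMk ((measurable_pi_apply k).comp
          measurable_snd))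
    have hprodmeas : Measurable fun p : (ℝ × Bool) × (Fin n → ℝ × Bool) =>
        ({y : ℝ × Bool | y.2 = true}.indicator e p.1)
          * ({p : (ℝ × Bool) × (Fin n → ℝ × Bool) | ∀ k, (p.1.1, p.2 k) ∈ D}.indicator
              (fun _ => 1) p) :=
      ((hemeas.indicator htrueMeas).comp measurable_fst).mul
        (measurable_const.indicator hUmeas)
    rw [lintegral_prod _ hprodmeas.aemeasurable]
    have h3 : ∀ y : ℝ × Bool,
        (∫⁻ z, ({y' : ℝ × Bool | y'.2 = true}.indicator e y)
            * ({p : (ℝ × Bool) × (Fin n → ℝ × Bool) | ∀ k, (p.1.1, p.2 k) ∈ D}.indicator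
                (fun _ => 1) (y, z)) ∂(Measure.pi fun _ : Fin n => m))
          = ({y' : ℝ × Bool | y'.2 = true}.indicator e y) * (ENNReal.ofReal (Fn y.1)) ^ n := by
      intro y
      have hne : ({y' : ℝ × Bool | y'.2 = true}.indicator e y) ≠ ⊤ := by
        by_cases h : y ∈ {y' : ℝ × Bool | y'.2 = true}
        · rw [Set.indicator_of_mem h, he_def]
          exact ENNReal.ofReal_ne_top
        · rw [Set.indicator_of_notMem h]
          exact ENNReal.zero_ne_top
      rw [lintegral_const_mul' _ _ hne]
      congr 1
      have hset : (fun z : Fin n → ℝ × Bool =>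
          ({p : (ℝ × Bool) × (Fin n → ℝ × Bool) | ∀ k, (p.1.1, p.2 k) ∈ D}.indicator
            (fun _ => (1:ENNReal)) (y, z)))
          = (Set.univ.pi fun _ : Fin n => Prod.mk y.1 ⁻¹' D).indicator (fun _ => 1) := by
        funext z
        by_cases hz : ∀ k : Fin n, (y.1, z k) ∈ D
        · rw [Set.indicator_of_mem (hz : (y, z) ∈ _),
            Set.indicator_of_mem (by simpa [Set.mem_univ_pi] using hz)]
        · rw [Set.indicator_of_notMem (hz : ¬ (y, z) ∈ _),
            Set.indicator_of_notMem (by simpa [Set.mem_univ_pi] using hz)]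
      rw [hset, lintegral_indicator_const
        (MeasurableSet.univ_pi fun _ => hDmeas.preimage measurable_prodMk_left),
        Measure.pi_pi, hslice y.1]
      simp [Finset.prod_const]
    rw [lintegral_congr h3, hm_def, lintegral_add_measure]
    have hφmeas : Measurable fun y : ℝ × Bool =>
        ({y' : ℝ × Bool | y'.2 = true}.indicator e y) * (ENNReal.ofReal (Fn y.1)) ^ n :=
      (hemeas.indicator htrueMeas).mul
        ((ENNReal.measurable_ofReal.comp (hFnmeas.comp measurable_fst)).pow_const n)
    rw [lintegral_map hφmeas measurable_prodMk_right,
      lintegral_map hφmeas measurable_prodMk_right]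
    have hzero : ∀ w : ℝ,
        ({y' : ℝ × Bool | y'.2 = true}.indicator e (w, false))
          * (ENNReal.ofReal (Fn (w, false).1)) ^ n = 0 := by
      intro w
      rw [Set.indicator_of_notMem (by simp : ¬ ((w, false) : ℝ × Bool) ∈ _), zero_mul]
    rw [lintegral_congr hzero, lintegral_zero, add_zero]
    have hone : ∀ w : ℝ,
        ({y' : ℝ × Bool | y'.2 = true}.indicator e (w, true))
          * (ENNReal.ofReal (Fn (w, true).1)) ^ n
        = ENNReal.ofReal (Real.exp (-(π * lamg * Eu w ^ 2))) * (ENNReal.ofReal (Fn w)) ^ n := by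
      intro w
      rw [Set.indicator_of_mem
        (show ((w, true) : ℝ × Bool) ∈ {y' : ℝ × Bool | y'.2 = true} from rfl), he_def]
    have hgtm : Measurable fun w : ℝ => ENNReal.ofReal (fW w * κ w) :=
      ENNReal.measurable_ofReal.comp (hfWmeas.mul hκmeas)
    have hφm : Measurable fun w : ℝ =>
        ENNReal.ofReal (Real.exp (-(π * lamg * Eu w ^ 2))) * (ENNReal.ofReal (Fn w)) ^ n :=
      (hexpmeas.comp hEumeas).mul ((ENNReal.measurable_ofReal.comp hFnmeas).pow_const n)
    rw [lintegral_congr hone, lintegral_withDensity_eq_lintegral_mul _ hgtm hφm]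
    have h5 : ∀ w : ℝ,
        ((fun w => ENNReal.ofReal (fW w * κ w)) * fun w =>
          ENNReal.ofReal (Real.exp (-(π * lamg * Eu w ^ 2))) * (ENNReal.ofReal (Fn w)) ^ n) w
        = ENNReal.ofReal (fW w * κ w * Real.exp (-(π * lamg * Eu w ^ 2)) * Fn w ^ n) := by
      intro w
      simp only [Pi.mul_apply]
      rw [← ENNReal.ofReal_pow (hFnnn w), ← ENNReal.ofReal_mul (Real.exp_nonneg _),
        ← ENNReal.ofReal_mul (hκnn w), ← mul_assoc]
    rw [lintegral_congr h5]
    set J : ℝ → ℝ := fun w =>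
      fW w * κ w * Real.exp (-(π * lamg * Eu w ^ 2)) * Fn w ^ n with hJ_def
    have hJnn : ∀ w, 0 ≤ J w := by
      intro w
      rw [hJ_def]
      exact mul_nonneg (mul_nonneg (hκnn w) (Real.exp_nonneg _)) (pow_nonneg (hFnnn w) n)
    have hJg : (fun w => fW w * (κ w * (Real.exp (-(π * lamg * Eu w ^ 2)) * Fn w ^ n))) = J := by
      funext w
      rw [hJ_def]
      ring
    have hJint : Integrable J := by
      rw [← hJg]
      refine hIntg _ ?_ ?_ ?_
      · exact hκmeas.mul ((Real.measurable_exp.comp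
          (((hEumeas.pow_const 2).const_mul (π * lamg)).neg)).mul
          (hFnmeas.pow_const n))
      · intro w
        exact mul_nonneg (hκ0 w) (mul_nonneg (Real.exp_nonneg _) (pow_nonneg (hFnnn w) n))
      · intro w
        have he1 : Real.exp (-(π * lamg * Eu w ^ 2)) ≤ 1 := by
          rw [Real.exp_le_one_iff]
          have : 0 ≤ π * lamg * Eu w ^ 2 :=
            mul_nonneg (mul_nonneg Real.pi_pos.le hlamg.le) (sq_nonneg _)
          linarith
        have hp1 : Fn w ^ n ≤ 1 := pow_le_one₀ (hFnnn w) (hFnle1 w)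
        have hp0 : (0:ℝ) ≤ Fn w ^ n := pow_nonneg (hFnnn w) n
        calc κ w * (Real.exp (-(π * lamg * Eu w ^ 2)) * Fn w ^ n)
            ≤ 1 * (1 * 1) := by
              refine mul_le_mul (hκ1 w) ?_ ?_ zero_le_one
              · exact mul_le_mul he1 hp1 hp0 zero_le_one
              · exact mul_nonneg (Real.exp_nonneg _) hp0
        _ = 1 := by ring
    have h6 : (fun w => ENNReal.ofReal (J w))
        = (Set.Icc hu wp).indicator fun w => ENNReal.ofReal (J w) := by
      funext w
      by_cases hw : w ∈ Set.Icc hu wp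
      · rw [Set.indicator_of_mem hw]
      · rw [Set.indicator_of_notMem hw]
        have hfw : fW w = 0 := by
          apply hfWsupp
          rw [Set.mem_Icc] at hw
          push_neg at hw
          rcases le_or_gt hu w with h | h
          · exact Or.inr (hw h)
          · exact Or.inl h
        rw [hJ_def]
        simp [hfw]
    rw [h6, lintegral_indicator measurableSet_Icc,
      ← ofReal_integral_eq_lintegral_ofReal hJint.integrableOn (ae_of_all _ hJnn)]
    congr 1
    refine setIntegral_congr_fun measurableSet_Icc fun r _ => ?_
    simp only [hJ_def]
    rw [hFnIcc r]
  -- decompose the event into the disjoint union over the associated UAV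
  have hEv : {ω | ∃ i, L i ω = true
      ∧ (∀ j, j ≠ i → ((L j ω = true ∧ W j ω > W i ω)
          ∨ (L j ω = false ∧ W j ω > E (W i ω))))
      ∧ R ω > Eu (W i ω)}
      = ⋃ i, (fun ω => (fun k => (W k ω, L k ω), R ω)) ⁻¹' S i := by
    ext ω
    rw [Set.mem_setOf_eq, Set.mem_iUnion]
    refine exists_congr fun i => ?_
    rw [Set.mem_preimage, hS_def]
    simp only [Set.mem_setOf_eq, hD_def]
  have hdisj : Pairwise (Function.onFun Disjoint
      fun i => (fun ω => (fun k => (W k ω, L k ω), R ω)) ⁻¹' S i) := by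
    intro i i' hne
    rw [Function.onFun, Set.disjoint_left]
    intro ω hωi hωi'
    simp only [Set.mem_preimage, hS_def, Set.mem_setOf_eq, hD_def] at hωi hωi'
    obtain ⟨hL, hall, -⟩ := hωi
    obtain ⟨hL', hall', -⟩ := hωi'
    rcases hall i' (Ne.symm hne) with h | h
    · rcases hall' i hne with h' | h'
      · exact absurd h'.2 (not_lt.mpr h.2.le)
      · rw [hL] at h'
        exact Bool.noConfusion h'.1
    · rw [hL'] at h
      exact Bool.noConfusion h.1
  rw [hEv, measure_iUnion hdisj (fun i => (hSmeas i).preimage hZmeas), tsum_fintype]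
  have hval : ∀ i : Fin (n+1),
      μ ((fun ω => (fun k => (W k ω, L k ω), R ω)) ⁻¹' S i)
        = ENNReal.ofReal (∫ r in Set.Icc hu wp,
            fW r * κ r * Real.exp (-(π * lamg * Eu r ^ 2))
              * ((∫ w in Set.Icc r wp, fW w * κ w)
                  + ∫ w in Set.Icc (E r) wp, fW w * (1 - κ w)) ^ n) := by
    intro i
    rw [← Measure.map_apply hZmeas (hSmeas i)]
    exact hAval i
  rw [Finset.sum_congr rfl fun i _ => hval i, Finset.sum_const, Finset.card_univ,
    Fintype.card_fin, nsmul_eq_mul, ENNReal.ofReal_mul (by positivity : (0:ℝ) ≤ ((n+1 : ℕ):ℝ)),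
    ENNReal.ofReal_natCast]
end

section
/- With the setup of the association probabilities, the conditional CCDF of the horizontal distance X_g to the serving BS given association with a BS is P(X_g > x | s = g) = (1/A_g)·∫_x^∞ 2πλ_g r e^{−πλ_g r²}·(∫_{E_{g_l}(r)}^{w_p} f_W(w)κ_l(w)dw + ∫_{E_{g_n}(r)}^{w_p} f_W(w)(1−κ_l(w))dw)^{N} dr, and hence the conditional density is f_{X_g}(x) = (1/A_g)·2πλ_g x e^{−πλ_g x²}·(∫_{E_{g_l}(x)}^{w_p} f_W(w)κ_l(w)dw + ∫_{E_{g_n}(x)}^{w_p} f_W(w)(1−κ_l(w))dw)^{N}. -/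
/-!
The void probability of the BS process gives the distance `R` to the nearest BS the Rayleigh
density `2πλ_g r e^{-πλ_g r²}`. Since `R` is independent of the UAVs, conditioning on `R = r`
turns the association event into "every UAV lies beyond the exclusion radius of its link type at
`r`", whose probability is `P(r)^N` by independence of the UAVs, `P(r)` being the single-UAV
probability. Hence `P(S_g, R ∈ s) = ∫_s f_R(r) P(r)^N dr`; dividing by `A_g = P(S_g)` gives the
conditional density, and integrating it over `(x, ∞)` gives the conditional CCDF.
-/

open MeasureTheory ProbabilityTheory Real Set Filter ENNReal Topology

/-- The Rayleigh density whose tail is `exp (-c r²)`. -/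
noncomputable def rayleighPDF (c r : ℝ) : ℝ≥0∞ :=
  ENNReal.ofReal (if 0 ≤ r then 2 * c * r * exp (-(c * r ^ 2)) else 0)

lemma measurable_rayleighPDF (c : ℝ) : Measurable (rayleighPDF c) :=
  (Measurable.ite measurableSet_Ici (by fun_prop) measurable_const).ennreal_ofReal

lemma rayleighPDF_of_nonpos (c : ℝ) {r : ℝ} (hr : r ≤ 0) : rayleighPDF c r = 0 := by
  rcases hr.lt_or_eq with hr | rfl
  · simp [rayleighPDF, hr.not_ge]
  · simp [rayleighPDF]

lemma hasDerivAt_neg_exp_neg_mul_sq (c r : ℝ) :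
    HasDerivAt (fun r => -exp (-(c * r ^ 2))) (2 * c * r * exp (-(c * r ^ 2))) r := by
  refine (((hasDerivAt_pow 2 r).const_mul c).fun_neg.exp.fun_neg).congr_deriv ?_
  push_cast
  ring

lemma lintegral_Ioi_mul_exp_neg_mul_sq {c : ℝ} (hc : 0 < c) {x : ℝ} (hx : 0 ≤ x) :
    ∫⁻ r in Ioi x, ENNReal.ofReal (2 * c * r * exp (-(c * r ^ 2)))
      = ENNReal.ofReal (exp (-(c * x ^ 2))) := by
  have hderiv : ∀ r ∈ Ici x, HasDerivAt (fun r => -exp (-(c * r ^ 2)))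
      (2 * c * r * exp (-(c * r ^ 2))) r := fun r _ => hasDerivAt_neg_exp_neg_mul_sq c r
  have hnonneg : ∀ r ∈ Ioi x, 0 ≤ 2 * c * r * exp (-(c * r ^ 2)) := fun r hr => by
    have : 0 ≤ r := hx.trans hr.le
    positivity
  have hlim : Tendsto (fun r => -exp (-(c * r ^ 2))) atTop (𝓝 0) := by
    simpa using (tendsto_exp_atBot.comp <| tendsto_neg_atTop_atBot.comp <|
      (tendsto_pow_atTop two_ne_zero).const_mul_atTop hc).neg
  rw [← ofReal_integral_eq_lintegral_ofReal
      (integrableOn_Ioi_deriv_of_nonneg' hderiv hnonneg hlim)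
      ((ae_restrict_mem measurableSet_Ioi).mono hnonneg),
    integral_Ioi_of_hasDerivAt_of_nonneg' hderiv hnonneg hlim, zero_sub, neg_neg]

lemma withDensity_rayleighPDF_Ioi {c : ℝ} (hc : 0 < c) {x : ℝ} (hx : 0 ≤ x) :
    volume.withDensity (rayleighPDF c) (Ioi x) = ENNReal.ofReal (exp (-(c * x ^ 2))) := by
  rw [withDensity_apply _ measurableSet_Ioi, ← lintegral_Ioi_mul_exp_neg_mul_sq hc hx]
  refine setLIntegral_congr_fun measurableSet_Ioi fun r hr => ?_
  rw [rayleighPDF, if_pos (hx.trans hr.le)]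

lemma isProbabilityMeasure_withDensity_rayleighPDF {c : ℝ} (hc : 0 < c) :
    IsProbabilityMeasure (volume.withDensity (rayleighPDF c)) := by
  have hIic : volume.withDensity (rayleighPDF c) (Iic 0) = 0 := by
    rw [withDensity_apply _ measurableSet_Iic,
      setLIntegral_congr_fun measurableSet_Iic fun r hr => rayleighPDF_of_nonpos c hr]
    simp
  constructor
  rw [← Iic_union_Ioi (a := (0 : ℝ)), measure_union (Iic_disjoint_Ioi le_rfl) measurableSet_Ioi,
    hIic, withDensity_rayleighPDF_Ioi hc le_rfl]
  simp

lemma withDensity_rayleighPDF_Ioi_of_neg {c : ℝ} (hc : 0 < c) {x : ℝ} (hx : x < 0) :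
    volume.withDensity (rayleighPDF c) (Ioi x) = 1 := by
  have := isProbabilityMeasure_withDensity_rayleighPDF hc
  refine le_antisymm prob_le_one ?_
  calc 1 = volume.withDensity (rayleighPDF c) (Ioi 0) := by
        rw [withDensity_rayleighPDF_Ioi hc le_rfl]; simp
    _ ≤ _ := measure_mono (Ioi_subset_Ioi hx.le)

theorem MeasureTheory.Measure.ext_of_Ioi_of_isProbabilityMeasure {α : Type*} [TopologicalSpace α]
    [MeasurableSpace α] [SecondCountableTopology α] [LinearOrder α] [OrderTopology α]
    [BorelSpace α] {μ ν : Measure α} [IsProbabilityMeasure μ] [IsProbabilityMeasure ν]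
    (h : ∀ a, μ (Ioi a) = ν (Ioi a)) : μ = ν :=
  Measure.ext_of_Iic μ ν fun a => by
    rw [← compl_Ioi, prob_compl_eq_one_sub measurableSet_Ioi,
      prob_compl_eq_one_sub measurableSet_Ioi, h]

theorem map_eq_withDensity_rayleighPDF {Ω : Type*} [MeasurableSpace Ω] {μ : Measure Ω}
    [IsProbabilityMeasure μ] {c : ℝ} (hc : 0 < c) {R : Ω → ℝ} (hR : Measurable R)
    (hR0 : ∀ ω, 0 ≤ R ω)
    (hccdf : ∀ r, 0 ≤ r → μ {ω | R ω > r} = ENNReal.ofReal (exp (-(c * r ^ 2)))) :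
    μ.map R = volume.withDensity (rayleighPDF c) := by
  have := isProbabilityMeasure_withDensity_rayleighPDF hc
  have := Measure.isProbabilityMeasure_map (μ := μ) hR.aemeasurable
  refine Measure.ext_of_Ioi_of_isProbabilityMeasure fun x => ?_
  rw [Measure.map_apply hR measurableSet_Ioi]
  rcases le_or_gt 0 x with hx | hx
  · exact (hccdf x hx).trans (withDensity_rayleighPDF_Ioi hc hx).symm
  · rw [withDensity_rayleighPDF_Ioi_of_neg hc hx,
      eq_univ_of_forall (s := R ⁻¹' Ioi x) fun ω => hx.trans_le (hR0 ω), measure_univ]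

namespace ProbabilityTheory

variable {Ω β γ : Type*} [MeasurableSpace Ω] [MeasurableSpace β] [MeasurableSpace γ]
  {μ : Measure Ω}

theorem IndepFun.measure_inter_preimage_eq_setLIntegral [IsFiniteMeasure μ] {R : Ω → β}
    {V : Ω → γ} (hind : IndepFun R V μ) (hR : Measurable R) (hV : Measurable V)
    {C : β → Set γ} (hC : MeasurableSet {p : β × γ | p.2 ∈ C p.1}) {s : Set β}
    (hs : MeasurableSet s) :
    μ ({ω | V ω ∈ C (R ω)} ∩ R ⁻¹' s) = ∫⁻ b in s, μ.map V (C b) ∂μ.map R := by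
  have hCs : MeasurableSet ({p : β × γ | p.2 ∈ C p.1} ∩ Prod.fst ⁻¹' s) :=
    hC.inter (measurable_fst hs)
  have hsection : ∀ b, μ.map V (Prod.mk b ⁻¹' ({p : β × γ | p.2 ∈ C p.1} ∩ Prod.fst ⁻¹' s))
      = s.indicator (fun b => μ.map V (C b)) b := by
    intro b
    by_cases hb : b ∈ s <;> simp [hb, preimage_preimage]
  calc μ ({ω | V ω ∈ C (R ω)} ∩ R ⁻¹' s)
      = μ.map (fun ω => (R ω, V ω)) ({p : β × γ | p.2 ∈ C p.1} ∩ Prod.fst ⁻¹' s) := by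
        rw [Measure.map_apply (hR.prodMk hV) hCs]
        rfl
    _ = ∫⁻ b, s.indicator (fun b => μ.map V (C b)) b ∂μ.map R := by
        rw [hind.map_prod_eq_prod_map_map hR.aemeasurable hV.aemeasurable,
          Measure.prod_apply hCs]
        simp_rw [hsection]
    _ = ∫⁻ b in s, μ.map V (C b) ∂μ.map R := lintegral_indicator hs _

lemma cond_map_eq_withDensity {S : Set Ω} {X : Ω → β} (hX : Measurable X) {ν : Measure β}
    {g : β → ℝ≥0∞} (hg : Measurable g)
    (h : ∀ s, MeasurableSet s → μ (S ∩ X ⁻¹' s) = ∫⁻ b in s, g b ∂ν) :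
    (μ[|S]).map X = ν.withDensity fun b => (μ S)⁻¹ * g b := by
  ext s hs
  rw [Measure.map_apply hX hs, cond_apply' (hX hs), h s hs, withDensity_apply _ hs,
    lintegral_const_mul _ hg]

lemma measure_preimage_eq_ofReal_setIntegral [IsFiniteMeasure μ] {X : Ω → β}
    (hX : Measurable X) {ν : Measure β} {f : β → ℝ}
    (hlaw : μ.map X = ν.withDensity fun b => ENNReal.ofReal (f b))
    {s : Set β} (hs : MeasurableSet s) (hf : AEStronglyMeasurable f (ν.restrict s))
    (hf0 : ∀ b ∈ s, 0 ≤ f b) :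
    μ (X ⁻¹' s) = ENNReal.ofReal (∫ b in s, f b ∂ν) := by
  rw [integral_eq_lintegral_of_nonneg_ae ((ae_restrict_mem hs).mono hf0) hf,
    ← withDensity_apply _ hs, ← hlaw, Measure.map_apply hX hs,
    ofReal_toReal (measure_ne_top _ _)]

end ProbabilityTheory

/-- A UAV at distance `w` with LOS flag `l` does not preempt a BS at horizontal distance `r` iff
`(w, l) ∈ beyondExclusion (E_{g_l}(r)) (E_{g_n}(r))`. -/
def beyondExclusion (el en : ℝ) : Set (ℝ × Bool) :=
  {p | (p.2 = true → el < p.1) ∧ (p.2 = false → en < p.1)}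

noncomputable def beyondExclusionProb (fW κ : ℝ → ℝ) (wp el en : ℝ) : ℝ :=
  (∫ w in Icc el wp, fW w * κ w) + ∫ w in Icc en wp, fW w * (1 - κ w)

lemma measurableSet_beyondExclusion (el en : ℝ) : MeasurableSet (beyondExclusion el en) :=
  ((measurable_snd (measurableSet_singleton true)).imp
      (measurableSet_lt measurable_const measurable_fst)).inter
    ((measurable_snd (measurableSet_singleton false)).imp
      (measurableSet_lt measurable_const measurable_fst))

lemma measurableSet_forall_mem_beyondExclusion {β ι : Type*} [MeasurableSpace β]
    [Countable ι] {El En : β → ℝ} (hEl : Measurable El) (hEn : Measurable En) :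
    MeasurableSet
      {p : β × (ι → ℝ × Bool) | ∀ i, p.2 i ∈ beyondExclusion (El p.1) (En p.1)} := by
  rw [ofPred_forall]
  refine MeasurableSet.iInter fun i => ?_
  have hL : ∀ l : Bool, MeasurableSet {p : β × (ι → ℝ × Bool) | (p.2 i).2 = l} := fun l =>
    (by fun_prop : Measurable fun p : β × (ι → ℝ × Bool) => (p.2 i).2) (measurableSet_singleton l)
  exact ((hL true).imp (measurableSet_lt (by fun_prop) (by fun_prop))).inter
    ((hL false).imp (measurableSet_lt (by fun_prop) (by fun_prop)))

lemma measure_preimage_beyondExclusion {Ω : Type*} [MeasurableSpace Ω] (μ : Measure Ω)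
    {W : Ω → ℝ} {L : Ω → Bool} (hWL : Measurable fun ω => (W ω, L ω)) (el en : ℝ) :
    μ ((fun ω => (W ω, L ω)) ⁻¹' beyondExclusion el en)
      = μ {ω | W ω ∈ Ioi el ∧ L ω = true} + μ {ω | W ω ∈ Ioi en ∧ L ω = false} := by
  have hunion : (fun ω => (W ω, L ω)) ⁻¹' beyondExclusion el en
      = {ω | W ω ∈ Ioi el ∧ L ω = true} ∪ {ω | W ω ∈ Ioi en ∧ L ω = false} := by
    ext ω
    simp only [beyondExclusion, mem_preimage, mem_ofPred_eq, mem_union, mem_Ioi]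
    cases L ω <;> simp
  refine hunion ▸ measure_union ?_
    (hWL (measurableSet_Ioi.prod (measurableSet_singleton false)))
  exact disjoint_left.2 fun ω h1 h2 => by simp [h1.2] at h2

lemma setIntegral_Ioi_eq_setIntegral_Icc_of_eq_zero {z : ℝ → ℝ} {b : ℝ}
    (hz : ∀ w, b < w → z w = 0) (a : ℝ) : ∫ w in Ioi a, z w = ∫ w in Icc a b, z w := by
  rw [integral_Icc_eq_integral_Ioc,
    setIntegral_eq_of_subset_of_forall_sdiff_eq_zero measurableSet_Ioi Ioc_subset_Ioi_self]
  exact fun w hw => hz w (lt_of_not_ge fun h => hw.2 ⟨hw.1, h⟩)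

lemma measurable_setIntegral_Icc_comp {β : Type*} [MeasurableSpace β] {z : ℝ → ℝ}
    (hz : Measurable z) {E : β → ℝ} (hE : Measurable E) (b : ℝ) :
    Measurable fun x => ∫ w in Icc (E x) b, z w := by
  have hset : MeasurableSet {p : β × ℝ | E p.1 ≤ p.2 ∧ p.2 ≤ b} :=
    (measurableSet_le (by fun_prop) measurable_snd).inter
      (measurableSet_le measurable_snd measurable_const)
  have hind : (fun x => ∫ w in Icc (E x) b, z w)
      = fun x => ∫ w, {p : β × ℝ | E p.1 ≤ p.2 ∧ p.2 ≤ b}.indicator (fun p => z p.2) (x, w) := by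
    ext x
    rw [← integral_indicator measurableSet_Icc]
    rfl
  rw [hind]
  exact ((hz.comp measurable_snd).indicator hset).stronglyMeasurable.integral_prod_right'.measurable

section SingleUAV

variable {fW κ : ℝ → ℝ} {wp : ℝ}

lemma beyondExclusionProb_nonneg (hfW0 : ∀ w, 0 ≤ fW w) (hκ0 : ∀ w, 0 ≤ κ w)
    (hκ1 : ∀ w, κ w ≤ 1) (el en : ℝ) : 0 ≤ beyondExclusionProb fW κ wp el en :=
  add_nonneg (setIntegral_nonneg measurableSet_Icc fun w _ => mul_nonneg (hfW0 w) (hκ0 w))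
    (setIntegral_nonneg measurableSet_Icc fun w _ => mul_nonneg (hfW0 w) (sub_nonneg.2 (hκ1 w)))

lemma measurable_beyondExclusionProb {β : Type*} [MeasurableSpace β] (hfW : Measurable fW)
    (hκ : Measurable κ) {El En : β → ℝ} (hEl : Measurable El) (hEn : Measurable En) :
    Measurable fun x => beyondExclusionProb fW κ wp (El x) (En x) :=
  (measurable_setIntegral_Icc_comp (hfW.mul hκ) hEl wp).add
    (measurable_setIntegral_Icc_comp (hfW.mul (measurable_const.sub hκ)) hEn wp)

variable {Ω : Type*} [MeasurableSpace Ω] {μ : Measure Ω}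

lemma measure_preimage_beyondExclusion_eq_ofReal {W : Ω → ℝ} {L : Ω → Bool}
    (hWL : Measurable fun ω => (W ω, L ω)) (hfW0 : ∀ w, 0 ≤ fW w)
    (hfW_supp : ∀ w, wp < w → fW w = 0) (hκ0 : ∀ w, 0 ≤ κ w) (hκ1 : ∀ w, κ w ≤ 1)
    (hlaw : ∀ s : Set ℝ, MeasurableSet s →
      μ {ω | W ω ∈ s ∧ L ω = true} = ENNReal.ofReal (∫ w in s, fW w * κ w)
      ∧ μ {ω | W ω ∈ s ∧ L ω = false} = ENNReal.ofReal (∫ w in s, fW w * (1 - κ w)))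
    (el en : ℝ) :
    μ ((fun ω => (W ω, L ω)) ⁻¹' beyondExclusion el en)
      = ENNReal.ofReal (beyondExclusionProb fW κ wp el en) := by
  have hvanish : ∀ g : ℝ → ℝ, ∀ w, wp < w → fW w * g w = 0 := fun g w hw => by
    rw [hfW_supp w hw, zero_mul]
  rw [measure_preimage_beyondExclusion μ hWL, (hlaw _ measurableSet_Ioi).1,
    (hlaw _ measurableSet_Ioi).2, setIntegral_Ioi_eq_setIntegral_Icc_of_eq_zero (hvanish κ),
    setIntegral_Ioi_eq_setIntegral_Icc_of_eq_zero (hvanish (1 - κ ·)), ← ofReal_add,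
    beyondExclusionProb]
  · exact setIntegral_nonneg measurableSet_Icc fun w _ => mul_nonneg (hfW0 w) (hκ0 w)
  · exact setIntegral_nonneg measurableSet_Icc fun w _ =>
      mul_nonneg (hfW0 w) (sub_nonneg.2 (hκ1 w))

lemma map_forall_mem_beyondExclusion_eq_ofReal_pow {ι : Type*} [Fintype ι] {W : ι → Ω → ℝ}
    {L : ι → Ω → Bool} (hWL : ∀ i, Measurable fun ω => (W i ω, L i ω))
    (hiid : iIndepFun (fun i ω => (W i ω, L i ω)) μ) (hfW0 : ∀ w, 0 ≤ fW w)
    (hfW_supp : ∀ w, wp < w → fW w = 0) (hκ0 : ∀ w, 0 ≤ κ w) (hκ1 : ∀ w, κ w ≤ 1)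
    (hlaw : ∀ i, ∀ s : Set ℝ, MeasurableSet s →
      μ {ω | W i ω ∈ s ∧ L i ω = true} = ENNReal.ofReal (∫ w in s, fW w * κ w)
      ∧ μ {ω | W i ω ∈ s ∧ L i ω = false} = ENNReal.ofReal (∫ w in s, fW w * (1 - κ w)))
    (el en : ℝ) :
    μ.map (fun ω i => (W i ω, L i ω)) {v | ∀ i, v i ∈ beyondExclusion el en}
      = ENNReal.ofReal (beyondExclusionProb fW κ wp el en) ^ Fintype.card ι := by
  have := hiid.isProbabilityMeasure
  have hpi : {v : ι → ℝ × Bool | ∀ i, v i ∈ beyondExclusion el en}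
      = univ.pi fun _ => beyondExclusion el en := by
    ext v
    simp
  rw [hpi, hiid.map_fun_eq_pi_map fun i => (hWL i).aemeasurable, Measure.pi_pi,
    Finset.prod_congr rfl fun i _ => by
      rw [Measure.map_apply (hWL i) (measurableSet_beyondExclusion el en),
        measure_preimage_beyondExclusion_eq_ofReal (hWL i) hfW0 hfW_supp hκ0 hκ1 (hlaw i)],
    Finset.prod_const, Finset.card_univ]

end SingleUAV

theorem serving_bs_conditional_distance_general
    {α : Type*} [MeasurableSpace α] (μ : Measure α) [IsProbabilityMeasure μ]
    (N : ℕ) (hu wp lamg : ℝ)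
    (hlamg : 0 < lamg)
    (fW : ℝ → ℝ) (hfWmeas : Measurable fW) (hfWnonneg : ∀ w, 0 ≤ fW w)
    (hfWsupp : ∀ w, w < hu ∨ wp < w → fW w = 0)
    (κ : ℝ → ℝ) (hκmeas : Measurable κ) (hκ0 : ∀ w, 0 ≤ κ w) (hκ1 : ∀ w, κ w ≤ 1)
    (Egl Egn : ℝ → ℝ) (hEgl : Measurable Egl) (hEgn : Measurable Egn)
    (W : Fin N → α → ℝ) (L : Fin N → α → Bool)
    (hWLmeas : ∀ i, Measurable (fun ω => (W i ω, L i ω)))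
    (hlaw : ∀ i, ∀ s : Set ℝ, MeasurableSet s →
      μ {ω | W i ω ∈ s ∧ L i ω = true} = ENNReal.ofReal (∫ w in s, fW w * κ w)
      ∧ μ {ω | W i ω ∈ s ∧ L i ω = false}
          = ENNReal.ofReal (∫ w in s, fW w * (1 - κ w)))
    (hiid : iIndepFun (fun i ω => (W i ω, L i ω)) μ)
    (R : α → ℝ) (hRmeas : Measurable R) (hRnonneg : ∀ ω, 0 ≤ R ω)
    (hRindep : IndepFun R (fun ω => fun i => (W i ω, L i ω)) μ)
    (hvoid : ∀ r : ℝ, 0 ≤ r →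
      μ {ω | R ω > r} = ENNReal.ofReal (Real.exp (-(π * lamg * r ^ 2))))
    (Sg : Set α)
    (hSg : Sg = {ω | ∀ i, (L i ω = true → W i ω > Egl (R ω))
                        ∧ (L i ω = false → W i ω > Egn (R ω))})
    (Ag : ℝ) (hAgpos : 0 < Ag) (hAg : ENNReal.ofReal Ag = μ Sg) :
    (∀ x : ℝ, 0 ≤ x →
      (μ[|Sg]) {ω | R ω > x}
        = ENNReal.ofReal ((1 / Ag) *
            ∫ r in Set.Ioi x,
              2 * π * lamg * r * Real.exp (-(π * lamg * r ^ 2))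
                * ((∫ w in Set.Icc (Egl r) wp, fW w * κ w)
                    + ∫ w in Set.Icc (Egn r) wp, fW w * (1 - κ w)) ^ N))
    ∧ (μ[|Sg]).map R = volume.withDensity (fun x => ENNReal.ofReal
        (if 0 ≤ x then
          (1 / Ag) * (2 * π * lamg * x * Real.exp (-(π * lamg * x ^ 2)))
            * ((∫ w in Set.Icc (Egl x) wp, fW w * κ w)
                + ∫ w in Set.Icc (Egn x) wp, fW w * (1 - κ w)) ^ N
         else 0)) := by
  have hc : 0 < π * lamg := mul_pos pi_pos hlamg
  have hP : Measurable fun r => beyondExclusionProb fW κ wp (Egl r) (Egn r) :=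
    measurable_beyondExclusionProb hfWmeas hκmeas hEgl hEgn
  have hP0 : ∀ r, 0 ≤ beyondExclusionProb fW κ wp (Egl r) (Egn r) := fun r =>
    beyondExclusionProb_nonneg hfWnonneg hκ0 hκ1 _ _
  have hjoint : ∀ s, MeasurableSet s → μ (Sg ∩ R ⁻¹' s) = ∫⁻ r in s, rayleighPDF (π * lamg) r
      * ENNReal.ofReal (beyondExclusionProb fW κ wp (Egl r) (Egn r)) ^ N := by
    intro s hs
    subst hSg
    refine (hRindep.measure_inter_preimage_eq_setLIntegral hRmeas (measurable_pi_lambda _ hWLmeas)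
      (C := fun r => {v | ∀ i, v i ∈ beyondExclusion (Egl r) (Egn r)})
      (measurableSet_forall_mem_beyondExclusion hEgl hEgn) hs).trans ?_
    rw [map_eq_withDensity_rayleighPDF hc hRmeas hRnonneg hvoid,
      setLIntegral_withDensity_eq_setLIntegral_mul_non_measurable _ (measurable_rayleighPDF _) _ hs
        (ae_of_all _ fun _ => ofReal_lt_top)]
    refine setLIntegral_congr_fun hs fun r _ => ?_
    rw [Pi.mul_apply, map_forall_mem_beyondExclusion_eq_ofReal_pow hWLmeas hiid hfWnonneg
      (fun w hw => hfWsupp w (Or.inr hw)) hκ0 hκ1 hlaw, Fintype.card_fin]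
  have hcond : (μ[|Sg]).map R = volume.withDensity fun x => ENNReal.ofReal (if 0 ≤ x then
      (1 / Ag) * (2 * π * lamg * x * exp (-(π * lamg * x ^ 2)))
        * beyondExclusionProb fW κ wp (Egl x) (Egn x) ^ N else 0) := by
    rw [cond_map_eq_withDensity hRmeas
      ((measurable_rayleighPDF _).mul (hP.ennreal_ofReal.pow_const N)) hjoint, ← hAg]
    congr with x
    by_cases hx : 0 ≤ x
    · rw [Pi.mul_apply, rayleighPDF, if_pos hx, if_pos hx, ← ofReal_inv_of_pos hAgpos,
        ← ofReal_pow (hP0 x), ← ofReal_mul (by positivity), ← ofReal_mul (by positivity)]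
      ring_nf
    · simp [rayleighPDF, hx]
  refine ⟨fun x hx => ?_, hcond⟩
  rw [show {ω | R ω > x} = R ⁻¹' Ioi x from rfl,
    measure_preimage_eq_ofReal_setIntegral hRmeas hcond measurableSet_Ioi, ← integral_const_mul]
  · refine congrArg _ (setIntegral_congr_fun measurableSet_Ioi fun r hr => ?_)
    simp only [if_pos (hx.trans hr.le), beyondExclusionProb]
    ring
  · exact (Measurable.ite measurableSet_Ici (by fun_prop) measurable_const).aestronglyMeasurable
  · intro r hr
    have := hP0 r
    have := hx.trans hr.le
    split_ifs <;> positivity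

/-- conditional serving-BS distance distribution, Lemma 3:
with the setup of the association probabilities (nearest-BS horizontal distance `R`
with CCDF `exp(−πλ_g r²)`, hence density `2πλ_g r e^{−πλ_g r²}`, and `N` i.i.d. UAVs
with distance density `f_W` on `[h_u, w_p]` and LOS probability `κ_l`), given the
BS-association event
`S_g = {every LOS UAV is farther than E_{g_l}(R), every NLOS UAV farther than E_{g_n}(R)}`
of probability `A_g`, the conditional CCDF of `R` is
`P(R > x | s = g) = (1/A_g) ∫_x^∞ 2πλ_g r e^{−πλ_g r²}
  (∫_{E_{g_l}(r)}^{w_p} f_W κ_l + ∫_{E_{g_n}(r)}^{w_p} f_W (1−κ_l))^N dr`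
and hence the conditional density is
`f_{X_g}(x) = (1/A_g) 2πλ_g x e^{−πλ_g x²}
  (∫_{E_{g_l}(x)}^{w_p} f_W κ_l + ∫_{E_{g_n}(x)}^{w_p} f_W (1−κ_l))^N`. -/
theorem serving_bs_conditional_distance
    {α : Type*} [MeasurableSpace α] (μ : Measure α) [IsProbabilityMeasure μ]
    (N : ℕ) (hN : 0 < N) (hu wp lamg : ℝ) (hhu : 0 < hu) (hwp : hu < wp)
    (hlamg : 0 < lamg)
    (fW : ℝ → ℝ) (hfWmeas : Measurable fW) (hfWnonneg : ∀ w, 0 ≤ fW w)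
    (hfWsupp : ∀ w, w < hu ∨ wp < w → fW w = 0)
    (hfWint : ∫ w, fW w = 1)
    (κ : ℝ → ℝ) (hκmeas : Measurable κ) (hκ0 : ∀ w, 0 ≤ κ w) (hκ1 : ∀ w, κ w ≤ 1)
    (Egl Egn : ℝ → ℝ) (hEgl : Measurable Egl) (hEgn : Measurable Egn)
    (W : Fin N → α → ℝ) (L : Fin N → α → Bool)
    (hWLmeas : ∀ i, Measurable (fun ω => (W i ω, L i ω)))
    (hlaw : ∀ i, ∀ s : Set ℝ, MeasurableSet s →
      μ {ω | W i ω ∈ s ∧ L i ω = true} = ENNReal.ofReal (∫ w in s, fW w * κ w)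
      ∧ μ {ω | W i ω ∈ s ∧ L i ω = false}
          = ENNReal.ofReal (∫ w in s, fW w * (1 - κ w)))
    (hiid : iIndepFun (fun i ω => (W i ω, L i ω)) μ)
    (R : α → ℝ) (hRmeas : Measurable R) (hRnonneg : ∀ ω, 0 ≤ R ω)
    (hRindep : IndepFun R (fun ω => fun i => (W i ω, L i ω)) μ)
    (hvoid : ∀ r : ℝ, 0 ≤ r →
      μ {ω | R ω > r} = ENNReal.ofReal (Real.exp (-(π * lamg * r ^ 2))))
    (Sg : Set α)
    (hSg : Sg = {ω | ∀ i, (L i ω = true → W i ω > Egl (R ω))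
                        ∧ (L i ω = false → W i ω > Egn (R ω))})
    (Ag : ℝ) (hAgpos : 0 < Ag) (hAg : ENNReal.ofReal Ag = μ Sg) :
    (∀ x : ℝ, 0 ≤ x →
      (μ[|Sg]) {ω | R ω > x}
        = ENNReal.ofReal ((1 / Ag) *
            ∫ r in Set.Ioi x,
              2 * π * lamg * r * Real.exp (-(π * lamg * r ^ 2))
                * ((∫ w in Set.Icc (Egl r) wp, fW w * κ w)
                    + ∫ w in Set.Icc (Egn r) wp, fW w * (1 - κ w)) ^ N))
    ∧ (μ[|Sg]).map R = volume.withDensity (fun x => ENNReal.ofReal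
        (if 0 ≤ x then
          (1 / Ag) * (2 * π * lamg * x * Real.exp (-(π * lamg * x ^ 2)))
            * ((∫ w in Set.Icc (Egl x) wp, fW w * κ w)
                + ∫ w in Set.Icc (Egn x) wp, fW w * (1 - κ w)) ^ N
         else 0)) :=
  serving_bs_conditional_distance_general μ N hu wp lamg hlamg fW hfWmeas hfWnonneg hfWsupp κ hκmeas
    hκ0 hκ1 Egl Egn hEgl hEgn W L hWLmeas hlaw hiid R hRmeas hRnonneg hRindep hvoid Sg hSg Ag hAgpos
    hAg
end
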